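/- arXiv:1310.0390 — 5 statements merged into one kernel-verified Lean document; each statement's English description precedes it below -/
import Mathlib

section
/- Let n ≥ 1 and let A, B, C, D be integers with A·B·D odd. Then the number of pairs (x,y) ∈ (ℤ/2ⁿℤ)² satisfying Ax² + Bxy + Cy² ≡ D (mod 2ⁿ) equals 2^(n−1) if C is even, and 3·2^(n−1) if C is odd. -/
/-!
Hensel lifting from `ZMod m` to `ZMod (m * 2)` for even `m`. The kernel of reduction
`ZMod (m * 2) → ZMod m` is `{0, m}`, a copy of `ZMod 2` via `s ↦ m * s`, and it squares to zero.
So, for `Q = A x² + B x y + C y²`, the four lifts of a point `(x, y)` take the values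
`Q (x + m s, y + m t) = Q (x, y) + m (s ∂ₓQ + t ∂ᵧQ)`, where the gradient is `B (y, x)` mod 2.
A solution of `Q = D` with `D` odd has `x` or `y` odd, so for odd `B` the gradient is nonzero
mod 2 and exactly two of the four lifts are solutions. The count therefore doubles from `2`
to `2 ^ n`; mod 2 (with `A`, `B`, `D` odd) there are 1 or 3 solutions as `C` is even or odd.
-/

open Finset ZMod

namespace ZMod

variable {m : ℕ}

lemma eq_zero_or_eq_one_of_two (s : ZMod 2) : s = 0 ∨ s = 1 := by
  revert s; decide

def kerEmbedding (m : ℕ) : ZMod 2 →+ ZMod (m * 2) :=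
  ZMod.lift 2 ⟨(AddMonoidHom.mulLeft (m : ZMod (m * 2))).comp (Int.castAddHom _), by
    simp only [AddMonoidHom.coe_comp, Function.comp_apply, Int.coe_castAddHom,
      AddMonoidHom.coe_mulLeft]
    exact_mod_cast natCast_self (m * 2)⟩

@[simp]
lemma kerEmbedding_one : kerEmbedding m 1 = m := by
  rw [kerEmbedding, ← Int.cast_one, lift_coe]
  simp

lemma kerEmbedding_natCast (k : ℕ) : kerEmbedding m k = m * k := by
  rw [← nsmul_one, map_nsmul, kerEmbedding_one, nsmul_eq_mul, Nat.cast_comm]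

lemma kerEmbedding_injective [NeZero m] : Function.Injective (kerEmbedding m) := by
  refine (injective_iff_map_eq_zero _).mpr fun s hs => ?_
  obtain rfl | rfl := eq_zero_or_eq_one_of_two s
  · rfl
  · rw [kerEmbedding_one, natCast_eq_zero_iff] at hs
    have := Nat.le_of_dvd (NeZero.pos m) hs
    have := NeZero.ne m
    omega

lemma castHom_kerEmbedding (s : ZMod 2) :
    castHom (dvd_mul_right m 2) (ZMod m) (kerEmbedding m s) = 0 := by
  obtain rfl | rfl := eq_zero_or_eq_one_of_two s
  · simp
  · rw [kerEmbedding_one, map_natCast, natCast_self]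

lemma castHom_eq_zero_iff_mem_range [NeZero m] (z : ZMod (m * 2)) :
    castHom (dvd_mul_right m 2) (ZMod m) z = 0 ↔ z ∈ (kerEmbedding m).range := by
  refine ⟨fun hz => ?_, ?_⟩
  · rw [← natCast_zmod_val z, map_natCast, natCast_eq_zero_iff] at hz
    obtain ⟨k, hk⟩ := hz
    exact ⟨k, by rw [← natCast_zmod_val z, hk, kerEmbedding_natCast, Nat.cast_mul]⟩
  · rintro ⟨s, rfl⟩
    exact castHom_kerEmbedding s

lemma castHom_two_kerEmbedding (hm : 2 ∣ m) (s : ZMod 2) :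
    castHom (dvd_mul_left 2 m) (ZMod 2) (kerEmbedding m s) = 0 := by
  obtain rfl | rfl := eq_zero_or_eq_one_of_two s
  · simp
  · rw [kerEmbedding_one, map_natCast, (natCast_eq_zero_iff m 2).mpr hm]

lemma kerEmbedding_mul [NeZero m] (s : ZMod 2) (w : ZMod (m * 2)) :
    kerEmbedding m s * w = kerEmbedding m (s * castHom (dvd_mul_left 2 m) (ZMod 2) w) := by
  obtain rfl | rfl := eq_zero_or_eq_one_of_two s
  · simp
  · rw [kerEmbedding_one, one_mul, ← natCast_zmod_val w, map_natCast, kerEmbedding_natCast]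

lemma kerEmbedding_mul_kerEmbedding [NeZero m] (hm : 2 ∣ m) (s t : ZMod 2) :
    kerEmbedding m s * kerEmbedding m t = 0 := by
  rw [kerEmbedding_mul, castHom_two_kerEmbedding hm, mul_zero, map_zero]

end ZMod

section BinaryQuad

variable {R S : Type*} (A B C : ℤ)

def binaryQuad [Ring R] (x y : R) : R := A * x ^ 2 + B * x * y + C * y ^ 2

lemma map_binaryQuad [Ring R] [Ring S] (f : R →+* S) (x y : R) :
    f (binaryQuad A B C x y) = binaryQuad A B C (f x) (f y) := by
  simp [binaryQuad]

lemma binaryQuad_add [CommRing R] (x y e f : R) :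
    binaryQuad A B C (x + e) (y + f) = binaryQuad A B C x y + e * (2 * A * x + B * y)
      + f * (B * x + 2 * C * y) + (A * (e * e) + B * (e * f) + C * (f * f)) := by
  unfold binaryQuad; ring

lemma binaryQuad_add_kerEmbedding {m : ℕ} [NeZero m] (hm : 2 ∣ m) (x y : ZMod (m * 2))
    (s t : ZMod 2) :
    binaryQuad A B C (x + kerEmbedding m s) (y + kerEmbedding m t) = binaryQuad A B C x y
      + kerEmbedding m ((s * castHom (dvd_mul_left 2 m) (ZMod 2) y
        + t * castHom (dvd_mul_left 2 m) (ZMod 2) x) * B) := by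
  rw [binaryQuad_add, kerEmbedding_mul, kerEmbedding_mul, kerEmbedding_mul_kerEmbedding hm,
    kerEmbedding_mul_kerEmbedding hm, kerEmbedding_mul_kerEmbedding hm, mul_zero, mul_zero,
    mul_zero, add_zero, add_zero, add_zero, add_assoc, ← map_add]
  congr 2
  simp only [map_add, map_mul, map_intCast, map_ofNat, CharTwo.two_eq_zero]
  ring

end BinaryQuad

lemma card_filter_linear_eq_two :
    ∀ u v c : ZMod 2, (u, v) ≠ 0 → #{st : ZMod 2 × ZMod 2 | st.1 * u + st.2 * v = c} = 2 := by
  decide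

def quadSolutions (m : ℕ) [NeZero m] (A B C D : ℤ) : Finset (ZMod m × ZMod m) :=
  {p | binaryQuad A B C p.1 p.2 = D}

lemma card_fiber_quadSolutions {m : ℕ} [NeZero m] (hm : 2 ∣ m) {A B C D : ℤ} (hB : Odd B)
    (hD : Odd D) {a b : ZMod m} (hab : binaryQuad A B C a b = D) :
    #{p ∈ quadSolutions (m * 2) A B C D |
      (castHom (dvd_mul_right m 2) (ZMod m) p.1, castHom (dvd_mul_right m 2) (ZMod m) p.2)
        = (a, b)} = 2 := by
  set π := castHom (dvd_mul_right m 2) (ZMod m)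
  set π₂ := castHom (dvd_mul_left 2 m) (ZMod 2)
  set ε := kerEmbedding m
  have hπε (u : ZMod 2) : π (ε u) = 0 := castHom_kerEmbedding u
  obtain ⟨x₀, rfl⟩ : ∃ x, π x = a := castHom_surjective _ a
  obtain ⟨y₀, rfl⟩ : ∃ y, π y = b := castHom_surjective _ b
  obtain ⟨c, hc⟩ : binaryQuad A B C x₀ y₀ - D ∈ ε.range := by
    rw [← castHom_eq_zero_iff_mem_range, map_sub, map_binaryQuad, hab, map_intCast, sub_self]
  have hlift (s t : ZMod 2) : binaryQuad A B C (x₀ + ε s) (y₀ + ε t) = D ↔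
      s * π₂ y₀ + t * π₂ x₀ = c := by
    rw [binaryQuad_add_kerEmbedding A B C hm, intCast_eq_one_iff_odd.mpr hB, mul_one,
      ← sub_eq_zero, add_sub_right_comm, ← hc, ← map_add,
      map_eq_zero_iff _ kerEmbedding_injective, CharTwo.add_eq_zero, eq_comm]
  have hgrad : (π₂ y₀, π₂ x₀) ≠ 0 := by
    intro h0
    obtain ⟨hy, hx⟩ := Prod.mk_eq_zero.mp h0
    have hQ : π₂ (binaryQuad A B C x₀ y₀) = π₂ (D + ε c) := by rw [hc, add_sub_cancel]
    rw [map_binaryQuad, hx, hy, map_add, castHom_two_kerEmbedding hm, map_intCast,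
      intCast_eq_one_iff_odd.mpr hD] at hQ
    simp [binaryQuad] at hQ
  refine .trans ?_ (card_filter_linear_eq_two _ _ c hgrad)
  refine (card_nbij (fun st : ZMod 2 × ZMod 2 => (x₀ + ε st.1, y₀ + ε st.2)) ?_ ?_ ?_).symm
  · rintro ⟨s, t⟩ hst
    simp only [quadSolutions, coe_filter, mem_filter, mem_univ, true_and, Set.mem_ofPred_eq,
      Prod.mk.injEq, map_add, hπε, add_zero, and_self, and_true] at hst ⊢
    exact (hlift s t).mpr hst
  · rintro ⟨s, t⟩ - ⟨s', t'⟩ - h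
    simp only [Prod.mk.injEq, add_right_inj] at h
    exact Prod.ext (kerEmbedding_injective h.1) (kerEmbedding_injective h.2)
  · rintro ⟨x, y⟩ hxy
    simp only [quadSolutions, coe_filter, mem_filter, mem_univ, true_and, Set.mem_ofPred_eq,
      Prod.mk.injEq] at hxy
    obtain ⟨hQ, hx, hy⟩ := hxy
    obtain ⟨s, rfl⟩ : ∃ s, x₀ + ε s = x := by
      obtain ⟨s, hs⟩ : x - x₀ ∈ ε.range := by
        rw [← castHom_eq_zero_iff_mem_range, map_sub, hx, sub_self]
      exact ⟨s, by rw [hs, add_sub_cancel]⟩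
    obtain ⟨t, rfl⟩ : ∃ t, y₀ + ε t = y := by
      obtain ⟨t, ht⟩ : y - y₀ ∈ ε.range := by
        rw [← castHom_eq_zero_iff_mem_range, map_sub, hy, sub_self]
      exact ⟨t, by rw [ht, add_sub_cancel]⟩
    exact ⟨(s, t), by simpa using (hlift s t).mp hQ, rfl⟩

lemma card_quadSolutions_mul_two {m : ℕ} [NeZero m] (hm : 2 ∣ m) {A B C D : ℤ} (hB : Odd B)
    (hD : Odd D) : #(quadSolutions (m * 2) A B C D) = 2 * #(quadSolutions m A B C D) := by
  let π := castHom (dvd_mul_right m 2) (ZMod m)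
  have hmaps : Set.MapsTo (fun p : ZMod (m * 2) × ZMod (m * 2) => (π p.1, π p.2))
      (quadSolutions (m * 2) A B C D) (quadSolutions m A B C D) := by
    intro p hp
    simp only [quadSolutions, coe_filter, mem_univ, true_and, Set.mem_ofPred_eq] at hp ⊢
    rw [← map_binaryQuad, hp, map_intCast]
  rw [card_eq_sum_card_fiberwise hmaps, sum_congr rfl fun ab hab =>
      card_fiber_quadSolutions hm hB hD (by simpa [quadSolutions] using hab),
    sum_const, smul_eq_mul, mul_comm]

lemma card_quadSolutions_two {A B C D : ℤ} (hA : Odd A) (hB : Odd B) (hD : Odd D) :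
    #(quadSolutions 2 A B C D) = if Even C then 1 else 3 := by
  simp only [quadSolutions, binaryQuad, intCast_eq_one_iff_odd.mpr hA,
    intCast_eq_one_iff_odd.mpr hB, intCast_eq_one_iff_odd.mpr hD]
  by_cases hC : Even C
  · rw [intCast_eq_zero_iff_even.mpr hC, if_pos hC]
    decide
  · rw [intCast_eq_one_iff_odd.mpr (Int.not_even_iff_odd.mp hC), if_neg hC]
    decide

lemma card_quadSolutions_two_pow {A B C D : ℤ} (hA : Odd A) (hB : Odd B) (hD : Odd D) (k : ℕ) :
    #(quadSolutions (2 ^ (k + 1)) A B C D) = (if Even C then 1 else 3) * 2 ^ k := by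
  induction k with
  | zero => exact (card_quadSolutions_two hA hB hD).trans (mul_one _).symm
  | succ k ih =>
    change #(quadSolutions (2 ^ (k + 1) * 2) A B C D) = _
    rw [card_quadSolutions_mul_two (dvd_pow_self 2 k.succ_ne_zero) hB hD, ih, pow_succ]
    ring

theorem count_quadratic_odd_ABD (n : ℕ) (hn : 1 ≤ n) (A B C D : ℤ)
    (h : Odd (A * B * D)) :
    Nat.card {xy : ZMod (2 ^ n) × ZMod (2 ^ n) //
        (A : ZMod (2 ^ n)) * xy.1 ^ 2 + (B : ZMod (2 ^ n)) * xy.1 * xy.2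
          + (C : ZMod (2 ^ n)) * xy.2 ^ 2 = (D : ZMod (2 ^ n))} =
      if Even C then 2 ^ (n - 1) else 3 * 2 ^ (n - 1) := by
  obtain ⟨hAB, hD⟩ := Int.odd_mul.mp h
  obtain ⟨hA, hB⟩ := Int.odd_mul.mp hAB
  obtain ⟨k, rfl⟩ : ∃ k, n = k + 1 := ⟨n - 1, by omega⟩
  rw [Nat.card_eq_fintype_card, Fintype.card_subtype]
  change #(quadSolutions (2 ^ (k + 1)) A B C D) = _
  rw [card_quadSolutions_two_pow hA hB hD, Nat.add_sub_cancel]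
  split_ifs <;> simp
end

section
/- Let n ≥ 3 and A, B, C, D integers with A and D odd, and set Δ = AC − B². If Δ ≡ 3 or 7 (mod 8), then the equation Ax² + 2Bxy + Cy² ≡ D (mod 2ⁿ) has exactly 2ⁿ solutions (x,y) in (ℤ/2ⁿℤ)². -/
/-!
Write `Q` for the form and `b` for its polar form, so that `Q (p + v) = Q p + 2 b(p, v) + Q v`.
Reduction of pairs modulo `2^(n+1)` to pairs modulo `2^n` is four-to-one, and the preimage of the
solutions of `Q = D` modulo `2^n` is the disjoint union of the solutions of `Q = D` and of
`Q = D + 2^n` modulo `2^(n+1)`. For odd `A` one has `b(p, (1 + B, 1)) ≡ Q p (mod 2)`, so when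
`n ≥ 3` the translation by `v = 2^(n-1) (1 + B, 1)` adds `2^n b(p, (1 + B, 1)) + 2^(2n-2) Q(1 + B, 1)
= 2^n` to every odd value of `Q`, and exchanges these two solution sets. Hence the number of
solutions doubles from each level to the next, and at level `8` it is a finite check.
-/

open Function

theorem AddMonoidHom.card_preimage_of_surjective {G H : Type*} [AddGroup G] [AddGroup H]
    (f : G →+ H) (hf : Surjective f) (s : Set H) :
    Nat.card (f ⁻¹' s) = Nat.card f.ker * Nat.card s := by
  let e := QuotientAddGroup.quotientKerEquivOfSurjective f hf
  have : f ⁻¹' s = QuotientAddGroup.mk ⁻¹' (e ⁻¹' s) := rfl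
  rw [this, Nat.card_congr (QuotientAddGroup.preimageMkEquivAddSubgroupProdSet _ _),
    Nat.card_prod, Nat.card_preimage_of_injective e.injective (by simp)]

section QuadForm

variable {R S : Type*} [CommRing R] [CommRing S] (A B C : ℤ)

def quadForm (p : R × R) : R := A * p.1 ^ 2 + 2 * B * p.1 * p.2 + C * p.2 ^ 2

def polarForm (p v : R × R) : R := (A * p.1 + B * p.2) * v.1 + (B * p.1 + C * p.2) * v.2

theorem map_quadForm (f : R →+* S) (p : R × R) :
    f (quadForm A B C p) = quadForm A B C (Prod.map f f p) := by
  simp [quadForm, map_ofNat]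

theorem map_polarForm (f : R →+* S) (p v : R × R) :
    f (polarForm A B C p v) = polarForm A B C (Prod.map f f p) (Prod.map f f v) := by
  simp [polarForm]

theorem quadForm_add (p v : R × R) :
    quadForm A B C (p + v) = quadForm A B C p + 2 * polarForm A B C p v + quadForm A B C v := by
  simp only [quadForm, polarForm, Prod.fst_add, Prod.snd_add]; ring

theorem quadForm_smul (c : R) (v : R × R) :
    quadForm A B C (c • v) = c ^ 2 * quadForm A B C v := by
  simp only [quadForm, Prod.smul_fst, Prod.smul_snd, smul_eq_mul]; ring

theorem polarForm_smul_right (c : R) (p v : R × R) :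
    polarForm A B C p (c • v) = c * polarForm A B C p v := by
  simp only [polarForm, Prod.smul_fst, Prod.smul_snd, smul_eq_mul]; ring

variable {A} in
theorem polarForm_eq_quadForm_zmod_two (hA : Odd A) (p : ZMod 2 × ZMod 2) :
    polarForm A B C p (1 + B, 1) = quadForm A B C p := by
  simp only [polarForm, quadForm, hA.intCast_zmod_two]
  generalize (B : ZMod 2) = b, (C : ZMod 2) = c
  revert b c p
  decide

end QuadForm

def reduceTwoPow (n : ℕ) : ZMod (2 ^ (n + 1)) →+* ZMod (2 ^ n) :=
  ZMod.castHom (pow_dvd_pow 2 (Nat.le_add_right n 1)) _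

def parityTwoPow (n : ℕ) : ZMod (2 ^ (n + 1)) →+* ZMod 2 :=
  ZMod.castHom (dvd_pow_self 2 (Nat.add_one_ne_zero n)) _

theorem two_pow_eq_zero_of_le {m k : ℕ} (h : m ≤ k) : (2 : ZMod (2 ^ m)) ^ k = 0 := by
  obtain ⟨j, rfl⟩ := Nat.exists_eq_add_of_le h
  rw [pow_add, show (2 : ZMod (2 ^ m)) ^ m = 0 by exact_mod_cast ZMod.natCast_self _, zero_mul]

section TwoPow

variable {n : ℕ}

theorem two_pow_ne_zero_zmod : (2 : ZMod (2 ^ (n + 1))) ^ n ≠ 0 := by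
  have : ((2 ^ n : ℕ) : ZMod (2 ^ (n + 1))) ≠ 0 := by
    rw [Ne, ZMod.natCast_eq_zero_iff, Nat.pow_dvd_pow_iff_le_right (by norm_num)]
    omega
  exact_mod_cast this

theorem two_pow_mul_eq_of_parityTwoPow_eq {z w : ZMod (2 ^ (n + 1))}
    (h : parityTwoPow n z = parityTwoPow n w) : 2 ^ n * z = 2 ^ n * w := by
  rw [← sub_eq_zero, ← map_sub, ← ZMod.natCast_zmod_val (z - w), map_natCast,
    ZMod.natCast_eq_zero_iff_even] at h
  obtain ⟨j, hj⟩ := h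
  rw [← sub_eq_zero, ← mul_sub, ← ZMod.natCast_zmod_val (z - w), hj, Nat.cast_add, ← two_mul,
    ← mul_assoc, ← pow_succ, two_pow_eq_zero_of_le le_rfl, zero_mul]

theorem reduceTwoPow_eq_zero_iff {z : ZMod (2 ^ (n + 1))} :
    reduceTwoPow n z = 0 ↔ z = 0 ∨ z = 2 ^ n := by
  constructor
  · intro hz
    rw [← ZMod.natCast_zmod_val z, map_natCast, ZMod.natCast_eq_zero_iff] at hz
    obtain ⟨j, hj⟩ := hz
    have hzj : z = 2 ^ n * (j : ZMod (2 ^ (n + 1))) := by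
      rw [← ZMod.natCast_zmod_val z, hj]; push_cast; rfl
    rcases Nat.even_or_odd j with hj | hj
    · left
      simpa [hzj] using two_pow_mul_eq_of_parityTwoPow_eq (z := j) (w := 0)
        (by rw [map_natCast, map_zero]; exact hj.natCast_zmod_two)
    · right
      simpa [hzj] using two_pow_mul_eq_of_parityTwoPow_eq (z := j) (w := 1)
        (by rw [map_natCast, map_one]; exact hj.natCast_zmod_two)
  · rintro (rfl | rfl)
    · exact map_zero _
    · rw [map_pow, map_ofNat, two_pow_eq_zero_of_le le_rfl]

theorem card_preimage_prodMap_reduceTwoPow (s : Set (ZMod (2 ^ n) × ZMod (2 ^ n))) :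
    Nat.card ((reduceTwoPow n).prodMap (reduceTwoPow n) ⁻¹' s) = 4 * Nat.card s := by
  set π := reduceTwoPow n
  have hsurj : Surjective (π.prodMap π) := by
    rw [RingHom.coe_prodMap]
    exact (ZMod.ringHom_surjective π).prodMap (ZMod.ringHom_surjective π)
  have key := (π.prodMap π).toAddMonoidHom.card_preimage_of_surjective hsurj
  have hker := key Set.univ
  simp only [Set.preimage_univ, Nat.card_univ, Nat.card_prod, Nat.card_zmod] at hker
  have hker4 : Nat.card (π.prodMap π).toAddMonoidHom.ker = 4 :=
    Nat.eq_of_mul_eq_mul_right (by positivity) (hker.symm.trans (by ring))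
  rw [← hker4]
  exact key s

variable (B C : ℤ) {A D : ℤ}

def shiftVector (B : ℤ) (n : ℕ) : ZMod (2 ^ (n + 1)) × ZMod (2 ^ (n + 1)) :=
  (2 : ZMod (2 ^ (n + 1))) ^ (n - 1) • (1 + (B : ZMod (2 ^ (n + 1))), 1)

theorem quadForm_add_shiftVector (hn : 3 ≤ n) (hA : Odd A) (hD : Odd D)
    {p : ZMod (2 ^ (n + 1)) × ZMod (2 ^ (n + 1))} (hp : quadForm A B C p = D) :
    quadForm A B C (p + shiftVector B n) = D + 2 ^ n := by
  set ρ := parityTwoPow n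
  have hu : Prod.map ρ ρ (1 + (B : ZMod (2 ^ (n + 1))), 1) = (1 + (B : ZMod 2), 1) := by
    simp
  have hpolar : 2 ^ n * polarForm A B C p (1 + B, 1) = 2 ^ n := by
    simpa using two_pow_mul_eq_of_parityTwoPow_eq (w := 1) (by
      rw [map_polarForm, hu, polarForm_eq_quadForm_zmod_two B C hA, ← map_quadForm, hp,
        map_intCast, map_one]
      exact hD.intCast_zmod_two)
  have hsq : ((2 : ZMod (2 ^ (n + 1))) ^ (n - 1)) ^ 2 = 0 := by
    rw [← pow_mul, two_pow_eq_zero_of_le (by omega)]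
  rw [shiftVector, quadForm_add, quadForm_smul, polarForm_smul_right, hp, hsq, zero_mul,
    add_zero, ← mul_assoc, mul_pow_sub_one (by omega), hpolar]

def solutionSet (A B C D : ℤ) (m : ℕ) : Set (ZMod m × ZMod m) := {p | quadForm A B C p = D}

theorem ncard_solutionSet_add_two_pow (hn : 3 ≤ n) (hA : Odd A) (hD : Odd D) :
    (solutionSet A B C (D + 2 ^ n) (2 ^ (n + 1))).ncard =
      (solutionSet A B C D (2 ^ (n + 1))).ncard := by
  have hD' : Odd (D + 2 ^ n) := hD.add_even (Int.even_pow.mpr ⟨even_two, by omega⟩)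
  apply le_antisymm <;>
    refine Set.ncard_le_ncard_of_injOn (· + shiftVector B n)
      (fun p hp => ?_) (add_left_injective _).injOn (Set.toFinite _)
  · simp only [solutionSet, Set.mem_ofPred_eq, quadForm_add_shiftVector B C hn hA hD' hp]
    push_cast
    rw [add_assoc, ← two_mul, ← pow_succ', two_pow_eq_zero_of_le le_rfl, add_zero]
  · simp only [solutionSet, Set.mem_ofPred_eq, quadForm_add_shiftVector B C hn hA hD hp]
    push_cast; rfl

theorem preimage_solutionSet :
    (reduceTwoPow n).prodMap (reduceTwoPow n) ⁻¹' solutionSet A B C D (2 ^ n) =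
      solutionSet A B C D (2 ^ (n + 1)) ∪ solutionSet A B C (D + 2 ^ n) (2 ^ (n + 1)) := by
  ext p
  simp only [Set.mem_preimage, solutionSet, Set.mem_ofPred_eq, Set.mem_union,
    RingHom.coe_prodMap, ← map_quadForm]
  rw [← map_intCast (reduceTwoPow n) D, ← sub_eq_zero, ← map_sub, reduceTwoPow_eq_zero_iff,
    sub_eq_zero, sub_eq_iff_eq_add']
  push_cast; rfl

theorem ncard_solutionSet_two_pow_succ (hn : 3 ≤ n) (hA : Odd A) (hD : Odd D) :
    (solutionSet A B C D (2 ^ (n + 1))).ncard = 2 * (solutionSet A B C D (2 ^ n)).ncard := by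
  have hdisj : Disjoint (solutionSet A B C D (2 ^ (n + 1)))
      (solutionSet A B C (D + 2 ^ n) (2 ^ (n + 1))) :=
    Set.disjoint_left.mpr fun p h₁ h₂ => two_pow_ne_zero_zmod (by
      simp only [solutionSet, Set.mem_ofPred_eq] at h₁ h₂
      push_cast at h₂
      rwa [h₁, left_eq_add] at h₂)
  have h := card_preimage_prodMap_reduceTwoPow (solutionSet A B C D (2 ^ n))
  rw [preimage_solutionSet, Nat.card_coe_set_eq, Nat.card_coe_set_eq,
    Set.ncard_union_eq hdisj, ncard_solutionSet_add_two_pow B C hn hA hD] at h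
  omega

end TwoPow

set_option maxHeartbeats 1000000 in
theorem card_filter_zmod_eight : ∀ a b c d : ZMod 8,
    ZMod.castHom (by norm_num : 2 ∣ 8) (ZMod 2) a = 1 →
    ZMod.castHom (by norm_num : 2 ∣ 8) (ZMod 2) d = 1 →
    (a * c - b ^ 2 = 3 ∨ a * c - b ^ 2 = 7) →
    (Finset.univ.filter fun p : ZMod 8 × ZMod 8 =>
      a * p.1 ^ 2 + 2 * b * p.1 * p.2 + c * p.2 ^ 2 = d).card = 8 := by
  decide

theorem ncard_solutionSet_eight {A B C D : ℤ} (hA : Odd A) (hD : Odd D)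
    (hΔ : (A * C - B ^ 2) % 8 = 3 ∨ (A * C - B ^ 2) % 8 = 7) :
    (solutionSet A B C D 8).ncard = 8 := by
  have hcast (k : ℤ) (hk : (A * C - B ^ 2) % 8 = k) : (A : ZMod 8) * C - B ^ 2 = k := by
    have := ZMod.intCast_mod (A * C - B ^ 2) 8
    push_cast at this
    rw [← hk, this]
  have h := card_filter_zmod_eight A B C D (by rw [map_intCast]; exact hA.intCast_zmod_two)
    (by rw [map_intCast]; exact hD.intCast_zmod_two) (hΔ.imp (hcast 3) (hcast 7))
  rwa [← Set.ncard_coe_finset, Finset.coe_filter_univ] at h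

theorem count_quadratic_disc_three_seven (n : ℕ) (hn : 3 ≤ n) (A B C D : ℤ)
    (hA : Odd A) (hD : Odd D)
    (hΔ : (A * C - B ^ 2) % 8 = 3 ∨ (A * C - B ^ 2) % 8 = 7) :
    Nat.card {xy : ZMod (2 ^ n) × ZMod (2 ^ n) //
        (A : ZMod (2 ^ n)) * xy.1 ^ 2 + 2 * (B : ZMod (2 ^ n)) * xy.1 * xy.2
          + (C : ZMod (2 ^ n)) * xy.2 ^ 2 = (D : ZMod (2 ^ n))} = 2 ^ n := by
  change (solutionSet A B C D (2 ^ n)).ncard = 2 ^ n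
  induction n, hn using Nat.le_induction with
  | base => exact ncard_solutionSet_eight hA hD hΔ
  | succ n hn ih => rw [ncard_solutionSet_two_pow_succ B C hn hA hD, ih, pow_succ, mul_comm]
end

section
/- Let n ≥ 3 and A, B, C, D integers with A and D odd, and set Δ = AC − B². If Δ ≡ 0 (mod 8), then the equation Ax² + 2Bxy + Cy² ≡ D (mod 2ⁿ) has exactly 2^(n+2) solutions in (ℤ/2ⁿℤ)² if AD ≡ 1 (mod 8), and no solutions otherwise. -/
lemma sq_lift (m : ℤ) (hm : m % 8 = 1) : ∀ n, 3 ≤ n → ∃ u : ℤ, Odd u ∧ (2^n : ℤ) ∣ u^2 - m := by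
  intro n hn
  induction n, hn using Nat.le_induction with
  | base => exact ⟨1, odd_one, by omega⟩
  | succ n hn ih =>
    obtain ⟨p, rfl⟩ : ∃ p, n = p + 3 := ⟨n - 3, by omega⟩
    obtain ⟨u, hu, k, hk⟩ := ih
    obtain ⟨t, ht⟩ := hu
    have e1 : p + 3 - 1 = p + 2 := by omega
    refine ⟨u + k * 2^(p+2), ⟨t + k * 2^(p+1), by rw [ht, pow_succ, pow_succ]; ring⟩, ?_⟩
    refine ⟨k * (t+1) + k^2 * 2^p, ?_⟩
    have expand : (u + k * 2^(p+2))^2 - m = (u^2 - m) + 2*u*(k*2^(p+2)) + k^2 * (2^(p+2)*2^(p+2)) := by ring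
    rw [expand, hk, ht]
    ring

lemma odd_isCoprime_two {a : ℤ} (h : Odd a) : IsCoprime (2:ℤ) a := by
  obtain ⟨c, hc⟩ := h
  exact ⟨-c, 1, by rw [hc]; ring⟩

lemma half_dvd (q : ℕ) (U V : ℤ) (hU : Odd U) (hV : Odd V)
    (h : (2^(q+3) : ℤ) ∣ V^2 - U^2) : (2^(q+2) : ℤ) ∣ V - U ∨ (2^(q+2) : ℤ) ∣ V + U := by
  obtain ⟨s, hs⟩ := hU
  obtain ⟨t, ht⟩ := hV
  set a : ℤ := t - s with ha
  set b : ℤ := t + s + 1 with hb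
  have hab : (2^(q+1) : ℤ) ∣ a * b := by
    obtain ⟨k, hk⟩ := h
    refine ⟨k, ?_⟩
    have h1 : V^2 - U^2 = 4 * (a*b) := by rw [hs, ht, ha, hb]; ring
    have h4 : (2:ℤ)^(q+3) = 4 * 2^(q+1) := by ring
    rw [h4, h1, mul_assoc] at hk
    exact mul_left_cancel₀ (by norm_num : (4:ℤ) ≠ 0) hk
  have hVU1 : V - U = 2 * a := by rw [hs, ht, ha]; ring
  have hVU2 : V + U = 2 * b := by rw [hs, ht, hb]; ring
  have h2 : (2:ℤ)^(q+2) = 2 * 2^(q+1) := by ring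
  rcases Int.even_or_odd a with he | ho
  · -- a even, b odd, so 2^(q+1) ∣ a, i.e. 2^(q+2) ∣ V - U
    have hbo : Odd b := by
      obtain ⟨c, hc⟩ := he
      exact ⟨t - c, by omega⟩
    have := ((odd_isCoprime_two hbo).pow_left (m := q+1)).dvd_of_dvd_mul_right hab
    exact Or.inl (by rw [hVU1, h2]; exact mul_dvd_mul_left 2 this)
  · have := ((odd_isCoprime_two ho).pow_left (m := q+1)).dvd_of_dvd_mul_left hab
    exact Or.inr (by rw [hVU2, h2]; exact mul_dvd_mul_left 2 this)

lemma card_sqrt (q : ℕ) (M : ℤ) (hM : Odd M) :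
    Nat.card {u : ZMod (2^(q+3)) // u^2 = (M : ZMod (2^(q+3)))} = if M % 8 = 1 then 4 else 0 := by
  set N : ℕ := 2^(q+3) with hN
  haveI : NeZero N := ⟨by positivity⟩
  have h8 : (8:ℕ) ∣ N := by rw [hN, show (8:ℕ) = 2^3 by norm_num]; exact pow_dvd_pow 2 (by omega)
  have hker : ∀ a : ℤ, ((a : ZMod N) = 0) ↔ (2^(q+3) : ℤ) ∣ a := by
    intro a
    rw [ZMod.intCast_zmod_eq_zero_iff_dvd]
    norm_num [hN]
  split_ifs with hM8
  · -- positive case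
    obtain ⟨U, hUodd, hUdvd⟩ := sq_lift M hM8 (q+3) (by omega)
    set u₀ : ZMod N := ((U : ℤ) : ZMod N) with hu₀def
    set h : ZMod N := (((2^(q+2) : ℤ)) : ZMod N) with hhdef
    have hu₀ : u₀^2 = (M : ZMod N) := by
      have : ((U^2 - M : ℤ) : ZMod N) = 0 := (hker _).mpr hUdvd
      push_cast at this
      linear_combination this
    have h2h : 2 * h = 0 := by
      rw [hhdef, ← Int.cast_ofNat, ← Int.cast_mul]
      exact (hker _).mpr ⟨1, by ring⟩
    have hh2 : h^2 = 0 := by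
      rw [hhdef, ← Int.cast_pow]
      exact (hker _).mpr ⟨2^(q+1), by ring⟩
    -- distinctness helpers
    have hUO2 : ¬ ((2:ℤ) ∣ U) := by
      rw [Int.two_dvd_ne_zero, ← Int.odd_iff]; exact hUodd
    have key1 : ¬ (2:ℤ)^(q+3) ∣ 2*U := by
      intro hd
      have h4 : (4:ℤ) ∣ 2*U := dvd_trans ⟨2^(q+1), by ring⟩ hd
      obtain ⟨s, hs⟩ := hUodd
      omega
    have key2 : ∀ e : ℤ, e = 2^(q+2) ∨ e = -2^(q+2) → ¬ (2:ℤ)^(q+3) ∣ 2*U + e := by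
      intro e he hd
      have h1 : (2:ℤ)^(q+2) ∣ 2*U + e := dvd_trans ⟨2, by ring⟩ hd
      have h2 : (2:ℤ)^(q+2) ∣ e := by rcases he with rfl | rfl; exact dvd_refl _; exact dvd_neg.mpr (dvd_refl _)
      have h3 : (2:ℤ)^(q+2) ∣ 2*U := by
        have := h1.sub h2
        simpa using this
      have h4 : (2:ℤ)^(q+1) ∣ U := by
        rw [show (2:ℤ)^(q+2) = 2*2^(q+1) by ring] at h3
        exact (mul_dvd_mul_iff_left (by norm_num : (2:ℤ) ≠ 0)).mp h3
      exact hUO2 (dvd_trans (dvd_pow_self 2 (Nat.succ_ne_zero q)) h4)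
    have keyh : ¬ (2:ℤ)^(q+3) ∣ 2^(q+2) := by
      intro hd
      have := Int.le_of_dvd (by positivity) hd
      have h0 : (0:ℤ) < 2^(q+2) := by positivity
      have h23 : (2:ℤ)^(q+3) = 2*2^(q+2) := by ring
      linarith
    -- inequalities
    have ne1 : u₀ ≠ -u₀ := by
      intro heq
      refine key1 ((hker (2*U)).mp ?_)
      push_cast
      linear_combination heq
    have ne2 : u₀ ≠ u₀ + h := by
      intro heq
      refine keyh ((hker (2^(q+2))).mp ?_)
      push_cast
      push_cast [hhdef] at heq
      linear_combination -heq
    have ne3 : u₀ ≠ -u₀ + h := by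
      intro heq
      refine key2 (-2^(q+2)) (Or.inr rfl) ((hker _).mp ?_)
      push_cast
      push_cast [hhdef] at heq
      linear_combination heq
    have ne4 : -u₀ ≠ u₀ + h := by
      intro heq
      refine key2 (2^(q+2)) (Or.inl rfl) ((hker _).mp ?_)
      push_cast
      push_cast [hhdef] at heq
      linear_combination -heq
    have ne5 : -u₀ ≠ -u₀ + h := by
      intro heq
      refine keyh ((hker (2^(q+2))).mp ?_)
      push_cast
      push_cast [hhdef] at heq
      linear_combination -heq
    have ne6 : u₀ + h ≠ -u₀ + h := by
      intro heq
      refine key1 ((hker (2*U)).mp ?_)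
      push_cast
      linear_combination heq
    -- the solution set
    classical
    rw [Nat.card_eq_fintype_card, Fintype.card_subtype]
    have hset : (Finset.univ.filter (fun u : ZMod N => u^2 = (M : ZMod N)))
        = {u₀, -u₀, u₀ + h, -u₀ + h} := by
      ext v
      simp only [Finset.mem_filter, Finset.mem_univ, true_and, Finset.mem_insert,
        Finset.mem_singleton]
      constructor
      · intro hv
        -- v is odd
        have hvV : ((v.val : ℤ) : ZMod N) = v := by
          push_cast
          exact ZMod.natCast_rightInverse v
        set V : ℤ := (v.val : ℤ) with hV
        have hVodd : Odd V := by
          have hφ : ((V : ZMod 2)) = 1 := by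
            have φ := ZMod.castHom (dvd_trans (by norm_num : (2:ℕ) ∣ 8) h8) (ZMod 2)
            have h1 : (φ v)^2 = ((M : ZMod 2)) := by
              rw [← map_pow, hv, map_intCast]
            obtain ⟨s, hs⟩ := hM
            have h2 : ((M:ZMod 2)) = 1 := by
              rw [hs]; push_cast; ring_nf
              rw [show ((2:ZMod 2)) = 0 by decide]; ring
            rw [h2] at h1
            have h3 : φ v = 1 := by
              revert h1; generalize φ v = w; revert w; decide
            rw [← hvV, map_intCast] at h3
            exact h3
          rw [Int.odd_iff]
          have := (ZMod.intCast_eq_intCast_iff' V 1 2).mp (by rw [hφ]; norm_num)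
          omega
        have hdvd : (2:ℤ)^(q+3) ∣ V^2 - U^2 := by
          refine (hker _).mp ?_
          push_cast
          rw [hvV]
          linear_combination hv - hu₀
        have hmem : ∀ (W : ℤ) (w : ZMod N), w = ((W:ℤ) : ZMod N) → (2:ℤ)^(q+2) ∣ V - W →
            v = w ∨ v = w + h := by
          intro W w hw hdw
          obtain ⟨s, hs⟩ := hdw
          have hVW : V = W + s * 2^(q+2) := by linarith
          rcases Int.even_or_odd s with ⟨c, hc⟩ | ⟨c, hc⟩
          · left
            rw [hw, ← hvV, hVW, hc]
            push_cast
            have : ((c * 2^(q+3) : ℤ) : ZMod N) = 0 := (hker _).mpr ⟨c, by ring⟩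
            push_cast at this
            linear_combination this
          · right
            rw [hw, hhdef, ← hvV, hVW, hc]
            push_cast
            have : ((c * 2^(q+3) : ℤ) : ZMod N) = 0 := (hker _).mpr ⟨c, by ring⟩
            push_cast at this
            linear_combination this
        rcases half_dvd q U V hUodd hVodd hdvd with hd | hd
        · rcases hmem U u₀ rfl hd with h' | h'
          · exact Or.inl h'
          · exact Or.inr (Or.inr (Or.inl h'))
        · rcases hmem (-U) (-u₀) (by push_cast; ring) (by simpa [sub_neg_eq_add] using hd) with h' | h'
          · exact Or.inr (Or.inl h')
          · exact Or.inr (Or.inr (Or.inr h'))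
      · intro hv
        rcases hv with rfl | rfl | rfl | rfl
        · exact hu₀
        · rw [← hu₀]; ring
        · rw [← hu₀]; linear_combination u₀ * h2h + hh2
        · rw [← hu₀]; linear_combination (-u₀) * h2h + hh2
    rw [hset]
    rw [Finset.card_insert_of_notMem (by simp [ne1, ne2, ne3]),
      Finset.card_insert_of_notMem (by simp [ne4, ne5]),
      Finset.card_insert_of_notMem (by simp [ne6]),
      Finset.card_singleton]
  · -- negative case: no solutions
    rw [Nat.card_eq_zero]
    left
    constructor
    rintro ⟨u, hu⟩
    have φ := ZMod.castHom h8 (ZMod 8)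
    have h1 : (ZMod.castHom h8 (ZMod 8) u)^2 = ((M : ZMod 8)) := by
      rw [← map_pow, hu, map_intCast]
    obtain ⟨s, hs⟩ := hM
    have h2 : ((M : ZMod 8)) = 2 * (s : ZMod 8) + 1 := by rw [hs]; push_cast; ring
    have h3 : ((M : ZMod 8)) = 1 := by
      rw [h2] at h1 ⊢
      revert h1
      generalize (ZMod.castHom h8 (ZMod 8)) u = w
      generalize ((s : ZMod 8)) = c
      revert w c
      decide
    have := (ZMod.intCast_eq_intCast_iff' M 1 8).mp (by rw [h3]; norm_num)
    omega

theorem count_quadratic_disc_zero (n : ℕ) (hn : 3 ≤ n) (A B C D : ℤ)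
    (hA : Odd A) (hD : Odd D) (hΔ : (A * C - B ^ 2) % 8 = 0) :
    Nat.card {xy : ZMod (2 ^ n) × ZMod (2 ^ n) //
        (A : ZMod (2 ^ n)) * xy.1 ^ 2 + 2 * (B : ZMod (2 ^ n)) * xy.1 * xy.2
          + (C : ZMod (2 ^ n)) * xy.2 ^ 2 = (D : ZMod (2 ^ n))} =
      if A * D % 8 = 1 then 2 ^ (n + 2) else 0 := by
  classical
  obtain ⟨q, rfl⟩ : ∃ q, n = q + 3 := ⟨n - 3, by omega⟩
  set N : ℕ := 2^(q+3) with hNdef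
  haveI : NeZero N := ⟨by positivity⟩
  obtain ⟨k, hk⟩ : (8:ℤ) ∣ A*C - B^2 := Int.dvd_of_emod_eq_zero hΔ
  -- A is a unit mod N
  have hAunit : IsUnit ((A : ℤ) : ZMod N) := by
    have hval : (((A : ZMod N).val : ℕ) : ZMod N) = (A : ZMod N) := ZMod.natCast_rightInverse _
    rw [← hval]
    rw [ZMod.isUnit_iff_coprime]
    apply Nat.Coprime.pow_right
    have h2N : (2:ℤ) ∣ (N:ℤ) := ⟨2^(q+2), by push_cast [hNdef]; ring⟩
    have hmod : ((A : ZMod N).val : ℤ) % 2 = A % 2 := by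
      rw [ZMod.val_intCast]
      exact Int.emod_emod_of_dvd A h2N
    have hA2 : A % 2 = 1 := Int.odd_iff.mp hA
    rw [Nat.coprime_two_right, Nat.odd_iff]
    omega
  obtain ⟨a, ha⟩ := hAunit
  -- per-row count
  have step : ∀ y : ZMod N,
      Nat.card {x : ZMod N // (A : ZMod N) * x ^ 2 + 2 * (B : ZMod N) * x * y
          + (C : ZMod N) * y ^ 2 = (D : ZMod N)}
        = if A * D % 8 = 1 then 4 else 0 := by
    intro y
    have hy : (((y.val : ℤ)) : ZMod N) = y := by
      push_cast
      exact ZMod.natCast_rightInverse y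
    set Y : ℤ := (y.val : ℤ) with hY
    have hmodd : Odd (A*D - (A*C - B^2)*Y^2) := by
      obtain ⟨s, hs⟩ := hA
      obtain ⟨t, ht⟩ := hD
      refine ⟨2*s*t + s + t - 4*k*Y^2, ?_⟩
      rw [hk, hs, ht]; ring
    have hmmod : (A*D - (A*C - B^2)*Y^2) % 8 = A*D % 8 := by
      rw [hk, show A*D - 8*k*Y^2 = A*D + 8*(-(k*Y^2)) by ring]
      simp [Int.add_mul_emod_self_left]
    have hcount := card_sqrt q (A*D - (A*C - B^2)*Y^2) hmodd
    rw [hmmod] at hcount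
    rw [← hcount]
    refine Nat.card_congr (Equiv.subtypeEquiv
      ⟨fun x => ↑a * x + (B : ZMod N) * y,
       fun u => ↑a⁻¹ * (u - (B : ZMod N) * y),
       fun x => by
        show ↑a⁻¹ * ((↑a * x + (B : ZMod N) * y) - (B : ZMod N) * y) = x
        rw [add_sub_cancel_right, ← mul_assoc, Units.inv_mul, one_mul],
       fun u => by
        show ↑a * (↑a⁻¹ * (u - (B : ZMod N) * y)) + (B : ZMod N) * y = u
        rw [← mul_assoc, Units.mul_inv, one_mul, sub_add_cancel]⟩
      (fun x => ?_))
    show (A : ZMod N) * x ^ 2 + 2 * (B : ZMod N) * x * y + (C : ZMod N) * y ^ 2 = (D : ZMod N) ↔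
      (↑a * x + (B : ZMod N) * y)^2 = ((A*D - (A*C - B^2)*Y^2 : ℤ) : ZMod N)
    rw [ha]
    constructor
    · intro hx
      push_cast
      rw [hy]
      linear_combination (A : ZMod N) * hx
    · intro hx
      push_cast at hx
      rw [hy] at hx
      refine IsUnit.mul_left_cancel (M := ZMod N) (a := (A : ZMod N)) (ha ▸ a.isUnit) ?_
      linear_combination hx
  -- sum over y
  have e : {xy : ZMod N × ZMod N //
        (A : ZMod N) * xy.1 ^ 2 + 2 * (B : ZMod N) * xy.1 * xy.2
          + (C : ZMod N) * xy.2 ^ 2 = (D : ZMod N)} ≃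
      Σ y : ZMod N, {x : ZMod N // (A : ZMod N) * x ^ 2 + 2 * (B : ZMod N) * x * y
          + (C : ZMod N) * y ^ 2 = (D : ZMod N)} :=
    ⟨fun p => ⟨p.1.2, p.1.1, p.2⟩, fun s => ⟨(s.2.1, s.1), s.2.2⟩,
     fun p => rfl, fun s => rfl⟩
  rw [Nat.card_congr e, Nat.card_eq_fintype_card, Fintype.card_sigma]
  have : ∀ y : ZMod N, Fintype.card {x : ZMod N // (A : ZMod N) * x ^ 2 + 2 * (B : ZMod N) * x * y
          + (C : ZMod N) * y ^ 2 = (D : ZMod N)} = if A * D % 8 = 1 then 4 else 0 := by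
    intro y
    rw [← Nat.card_eq_fintype_card]
    exact step y
  rw [Finset.sum_congr rfl (fun y _ => this y), Finset.sum_const, Finset.card_univ,
    ZMod.card]
  split_ifs
  · show N * 4 = 2^(q+3+2)
    rw [hNdef]
    ring
  · exact Nat.mul_zero N
end

section
/- Let n ≥ 3 and A, B, C, D integers with A and D odd, and set Δ = AC − B². If Δ ≡ 1 or 5 (mod 8), then the equation Ax² + 2Bxy + Cy² ≡ D (mod 2ⁿ) has exactly 2^(n+1) solutions in (ℤ/2ⁿℤ)² if AD ≡ 1 or 5 (mod 8), and no solutions otherwise. -/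
/-!
As `A` is a unit modulo `2ⁿ`, completing the square, `A (Ax² + 2Bxy + Cy²) = (Ax + By)² + Δy²`,
reduces the count to the solutions of `X² + ΔY² = AD`. Modulo 4 the form `X² + Y²` never takes
the value 3, which gives the empty case. When `Δ ≡ AD ≡ 1 (mod 4)` the number of solutions doubles
from one power `2ᵏ` (`k ≥ 3`) to the next: the pairs modulo `2ᵏ⁺¹` lying over solutions modulo `2ᵏ`
are four times as many, they are the solutions of `X² + ΔY² = m` together with those of
`X² + ΔY² = m + 2ᵏ`, and adding `2ᵏ⁻¹` to the odd coordinate exchanges these two sets (this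
uses `k ≥ 3`, so that `(2ᵏ⁻¹)² ≡ 0 (mod 2ᵏ⁺¹)`).
The case `n = 3` is a finite check.
-/

open Finset

theorem AddMonoidHom.card_filter_mem_mul_card {G H : Type*} [AddGroup G] [AddGroup H]
    [Fintype G] [Fintype H] [DecidableEq H] (f : G →+ H) (hf : Function.Surjective f)
    (t : Finset H) : #{g | f g ∈ t} * Fintype.card H = #t * Fintype.card G := by
  have hsum (s : Finset H) : #{g | f g ∈ s} = #s * #{g | f g = 0} := by
    rw [card_eq_sum_card_fiberwise (t := s) (f := f) (fun g hg => by simpa using hg)]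
    refine (sum_congr rfl fun h hh => ?_).trans (sum_const_nat fun _ _ => rfl)
    rw [filter_filter]
    refine (congrArg card (filter_congr fun g _ => ?_)).trans
      (AddMonoidHom.card_fiber_eq_of_mem_range f (hf h) (hf 0))
    exact ⟨fun h' => h'.2, fun h' => ⟨h' ▸ hh, h'⟩⟩
  have hG := hsum univ
  simp only [mem_univ, filter_true, card_univ] at hG
  rw [hsum, hG]
  ring

namespace ZMod

theorem exists_eq_mul_of_castHom_eq_zero {d m : ℕ} (h : d ∣ m) {z : ZMod m}
    (hz : castHom h (ZMod d) z = 0) : ∃ r, z = d * r := by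
  rw [← intCast_zmod_cast z, map_intCast, intCast_zmod_eq_zero_iff_dvd] at hz
  obtain ⟨r, hr⟩ := hz
  exact ⟨r, by rw [← intCast_zmod_cast z, hr, Int.cast_mul, Int.cast_natCast]⟩

theorem eq_zero_or_eq_two_pow_of_castHom_eq_zero {k : ℕ} {z : ZMod (2 ^ (k + 1))}
    (hz : castHom (pow_dvd_pow 2 k.le_succ) (ZMod (2 ^ k)) z = 0) : z = 0 ∨ z = 2 ^ k := by
  have h0 : (2 : ZMod (2 ^ (k + 1))) ^ (k + 1) = 0 := by
    exact_mod_cast natCast_self (2 ^ (k + 1))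
  obtain ⟨r, rfl⟩ := exists_eq_mul_of_castHom_eq_zero _ hz
  have h2 : 2 ∣ 2 ^ (k + 1) := dvd_pow_self 2 k.succ_ne_zero
  obtain hr | hr : castHom h2 (ZMod 2) r = 0 ∨ castHom h2 (ZMod 2) (r - 1) = 0 := by
    rw [map_sub, map_one]
    generalize castHom h2 (ZMod 2) r = a
    revert a
    decide
  · obtain ⟨s, rfl⟩ := exists_eq_mul_of_castHom_eq_zero h2 hr
    left
    push_cast
    linear_combination s * h0
  · obtain ⟨s, hs⟩ := exists_eq_mul_of_castHom_eq_zero h2 hr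
    right
    push_cast
    linear_combination (2 : ZMod (2 ^ (k + 1))) ^ k * hs + s * h0

end ZMod

section DiagonalForm

variable {R : Type*} [CommRing R]

def diagSolutions [Fintype R] [DecidableEq R] (δ m : R) : Finset (R × R) :=
  {p | p.1 ^ 2 + δ * p.2 ^ 2 = m}

@[simp]
theorem mem_diagSolutions [Fintype R] [DecidableEq R] {δ m : R} {p : R × R} :
    p ∈ diagSolutions δ m ↔ p.1 ^ 2 + δ * p.2 ^ 2 = m := by
  simp [diagSolutions]

variable {χ : R →+* ZMod 2}

variable (χ) in
def oddShift (c : R) (p : R × R) : R × R :=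
  if χ p.1 = 1 then (p.1 + c, p.2) else (p.1, p.2 + c)

theorem oddShift_neg_oddShift {c : R} (hc : χ c = 0) (p : R × R) :
    oddShift χ (-c) (oddShift χ c p) = p := by
  by_cases h : χ p.1 = 1 <;> simp [oddShift, h, hc]

theorem exists_eq_one_add_two_mul (hχ : ∀ z, χ z = 0 → ∃ r, z = 2 * r) {x : R} (hx : χ x = 1) :
    ∃ r, x = 1 + 2 * r := by
  obtain ⟨r, hr⟩ := hχ (x - 1) (by rw [map_sub, hx, map_one, sub_self])
  exact ⟨r, by rw [← hr]; ring⟩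

/-- For odd `x` and `4c = 0` we have `2cx = 2c`, and `c² = 0` kills the remaining term. -/
theorem oddShift_sq_add_mul_sq (hχ : ∀ z, χ z = 0 → ∃ r, z = 2 * r) {δ c : R} (hδ : χ δ = 1)
    (hc2 : c ^ 2 = 0) (hc4 : 4 * c = 0) {p : R × R} (hp : χ (p.1 ^ 2 + δ * p.2 ^ 2) = 1) :
    (oddShift χ c p).1 ^ 2 + δ * (oddShift χ c p).2 ^ 2 = p.1 ^ 2 + δ * p.2 ^ 2 + 2 * c := by
  by_cases h : χ p.1 = 1
  · obtain ⟨r, hr⟩ := exists_eq_one_add_two_mul hχ h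
    simp only [oddShift, if_pos h]
    linear_combination 2 * c * hr + hc2 + r * hc4
  · have hy : χ (δ * p.2) = 1 := by
      rw [map_add, map_mul, map_pow, map_pow, hδ] at hp
      rw [map_mul, hδ]
      revert h hp
      generalize χ p.1 = a
      generalize χ p.2 = b
      revert a b
      decide
    obtain ⟨r, hr⟩ := exists_eq_one_add_two_mul hχ hy
    simp only [oddShift, if_neg h]
    linear_combination 2 * c * hr + δ * hc2 + r * hc4

theorem card_diagSolutions_add_two_mul [Fintype R] [DecidableEq R]
    (hχ : ∀ z, χ z = 0 → ∃ r, z = 2 * r) {δ m c : R} (hδ : χ δ = 1) (hm : χ m = 1)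
    (hc : χ c = 0) (hc2 : c ^ 2 = 0) (hc4 : 4 * c = 0) :
    #(diagSolutions δ (m + 2 * c)) = #(diagSolutions δ m) := by
  have h2 : χ 2 = 0 := by rw [map_ofNat]; rfl
  refine card_nbij' (oddShift χ (-c)) (oddShift χ c) (fun p hp => ?_) (fun p hp => ?_)
    (fun p _ => by simpa using oddShift_neg_oddShift (c := -c) (by rwa [map_neg, neg_eq_zero]) p)
    (fun p _ => oddShift_neg_oddShift hc p)
  · rw [mem_coe, mem_diagSolutions] at hp ⊢
    rw [oddShift_sq_add_mul_sq hχ hδ (by rwa [neg_sq]) (by rw [mul_neg, hc4, neg_zero])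
      (by rw [hp, map_add, map_mul, h2, hm, zero_mul, add_zero]), hp]
    ring
  · rw [mem_coe, mem_diagSolutions] at hp ⊢
    rw [oddShift_sq_add_mul_sq hχ hδ hc2 hc4 (by rw [hp, hm]), hp]

end DiagonalForm

theorem filter_castHom_mem_diagSolutions (k : ℕ) (δ m : ZMod (2 ^ (k + 1))) :
    let π := ZMod.castHom (pow_dvd_pow 2 k.le_succ) (ZMod (2 ^ k))
    ({p | Prod.map π π p ∈ diagSolutions (π δ) (π m)} : Finset (ZMod (2 ^ (k + 1)) × _)) =
      diagSolutions δ m ∪ diagSolutions δ (m + 2 ^ k) := by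
  intro π
  ext p
  have hπ : π (2 ^ k) = 0 := by
    rw [map_pow, map_ofNat]
    exact_mod_cast ZMod.natCast_self (2 ^ k)
  simp only [mem_filter, mem_univ, true_and, mem_union, mem_diagSolutions, Prod.map_fst,
    Prod.map_snd]
  rw [← map_pow, ← map_pow, ← map_mul, ← map_add, ← sub_eq_zero, ← map_sub]
  constructor
  · intro h
    rcases ZMod.eq_zero_or_eq_two_pow_of_castHom_eq_zero h with h | h
    · left; linear_combination h
    · right; linear_combination h
  · rintro (h | h) <;> rw [h]
    · rw [sub_self, map_zero]
    · rw [add_sub_cancel_left, hπ]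

theorem card_diagSolutions_pow_two_succ {k : ℕ} (hk : 3 ≤ k) {δ m : ℤ} (hδ : Odd δ)
    (hm : Odd m) :
    #(diagSolutions (δ : ZMod (2 ^ (k + 1))) m) = 2 * #(diagSolutions (δ : ZMod (2 ^ k)) m) := by
  obtain ⟨j, rfl⟩ : ∃ j, k = j + 1 := ⟨k - 1, by omega⟩
  let π := ZMod.castHom (pow_dvd_pow 2 (j + 1).le_succ) (ZMod (2 ^ (j + 1)))
  let χ := ZMod.castHom (dvd_pow_self 2 (j + 1).succ_ne_zero) (ZMod 2)
  have hχ (z : ZMod (2 ^ (j + 2))) (hz : χ z = 0) : ∃ r, z = 2 * r := by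
    simpa using ZMod.exists_eq_mul_of_castHom_eq_zero _ hz
  have h0 : (2 : ZMod (2 ^ (j + 2))) ^ (j + 2) = 0 := by
    exact_mod_cast ZMod.natCast_self (2 ^ (j + 2))
  have hN : (2 : ZMod (2 ^ (j + 2))) ^ (j + 1) ≠ 0 := by
    have : ((2 ^ (j + 1) : ℕ) : ZMod (2 ^ (j + 2))) ≠ 0 := by
      rw [Ne, ZMod.natCast_eq_zero_iff, Nat.pow_dvd_pow_iff_le_right (by norm_num)]
      omega
    exact_mod_cast this
  have hpre := filter_castHom_mem_diagSolutions (j + 1) δ m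
  simp only [map_intCast, pow_succ' (2 : ZMod (2 ^ (j + 2))) j] at hpre
  have hdisj : Disjoint (diagSolutions (δ : ZMod (2 ^ (j + 2))) m)
      (diagSolutions (δ : ZMod (2 ^ (j + 2))) (m + 2 * 2 ^ j)) := by
    refine disjoint_left.2 fun p hp hp' => hN ?_
    rw [mem_diagSolutions] at hp hp'
    linear_combination hp - hp'
  have hshift := card_diagSolutions_add_two_mul hχ (δ := (δ : ZMod (2 ^ (j + 2)))) (m := m)
    (c := 2 ^ j) (by simpa [χ] using hδ.intCast_zmod_two) (by simpa [χ] using hm.intCast_zmod_two)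
    (by rw [map_pow, map_ofNat, show (2 : ZMod 2) = 0 from rfl, zero_pow (by omega)])
    (by obtain ⟨i, rfl⟩ : ∃ i, j = i + 2 := ⟨j - 2, by omega⟩
        linear_combination (2 : ZMod (2 ^ (i + 4))) ^ i * h0)
    (by rw [← h0]; ring)
  let Φ := π.toAddMonoidHom.prodMap π.toAddMonoidHom
  have hcount := Φ.card_filter_mem_mul_card
    (Prod.map_surjective.2 ⟨ZMod.castHom_surjective _, ZMod.castHom_surjective _⟩ :
      Function.Surjective (Prod.map π π))
    (diagSolutions (δ : ZMod (2 ^ (j + 1))) m)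
  rw [show ({g | Φ g ∈ diagSolutions (δ : ZMod (2 ^ (j + 1))) m} : Finset _) = _ from hpre,
    card_union_of_disjoint hdisj, hshift, Fintype.card_prod, Fintype.card_prod, ZMod.card,
    ZMod.card] at hcount
  simp only [pow_succ] at hcount
  refine Nat.eq_of_mul_eq_mul_right (show 0 < 2 ^ j * 2 ^ j by positivity) ?_
  linarith

theorem card_diagSolutions_two_pow_three {δ m : ℤ} (hδ : δ % 4 = 1) (hm : m % 4 = 1) :
    #(diagSolutions (δ : ZMod (2 ^ 3)) m) = 16 := by
  have key : ∀ δ m : ZMod 8, (δ = 1 ∨ δ = 5) → (m = 1 ∨ m = 5) →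
      #(diagSolutions δ m) = 16 := by decide
  rw [← ZMod.intCast_mod δ, ← ZMod.intCast_mod m]
  push_cast
  apply key
  · rcases (by omega : δ % 8 = 1 ∨ δ % 8 = 5) with h | h <;> simp [h]
  · rcases (by omega : m % 8 = 1 ∨ m % 8 = 5) with h | h <;> simp [h]

theorem card_diagSolutions_pow_two {n : ℕ} (hn : 3 ≤ n) {δ m : ℤ} (hδ : δ % 4 = 1)
    (hm : m % 4 = 1) : #(diagSolutions (δ : ZMod (2 ^ n)) m) = 2 ^ (n + 1) := by
  induction n, hn using Nat.le_induction with
  | base => exact card_diagSolutions_two_pow_three hδ hm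
  | succ k hk ih =>
    rw [card_diagSolutions_pow_two_succ hk (Int.odd_iff.2 (by omega)) (Int.odd_iff.2 (by omega)),
      ih, pow_succ 2 (k + 1), mul_comm]

theorem diagSolutions_pow_two_eq_empty {n : ℕ} (hn : 2 ≤ n) {δ m : ℤ} (hδ : δ % 4 = 1)
    (hm : m % 4 = 3) : diagSolutions (δ : ZMod (2 ^ n)) m = ∅ := by
  refine eq_empty_of_forall_notMem fun p hp => ?_
  have key : ∀ x y : ZMod 4, x ^ 2 + 1 * y ^ 2 ≠ 3 := by decide
  have h := congrArg (ZMod.castHom (pow_dvd_pow 2 hn) (ZMod (2 ^ 2))) (mem_diagSolutions.1 hp)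
  simp only [map_add, map_mul, map_pow, map_intCast] at h
  rw [← ZMod.intCast_mod δ, ← ZMod.intCast_mod m] at h
  push_cast [hδ, hm] at h
  exact key _ _ h

section CompletingTheSquare

variable {R : Type*} [CommRing R] {a : R}

noncomputable def completeSquareEquiv (ha : IsUnit a) (b c d : R) :
    {p : R × R // a * p.1 ^ 2 + 2 * b * p.1 * p.2 + c * p.2 ^ 2 = d} ≃
      {p : R × R // p.1 ^ 2 + (a * c - b ^ 2) * p.2 ^ 2 = a * d} where
  toFun p := ⟨(a * p.1.1 + b * p.1.2, p.1.2), by linear_combination a * p.2⟩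
  invFun q := ⟨(↑ha.unit⁻¹ * (q.1.1 - b * q.1.2), q.1.2), by
    linear_combination ↑ha.unit⁻¹ * q.2 +
      (d - c * q.1.2 ^ 2 + ↑ha.unit⁻¹ * (q.1.1 - b * q.1.2) ^ 2) * ha.mul_val_inv⟩
  left_inv p := by
    ext
    · show _ * (a * _ + _ - _) = _
      linear_combination p.1.1 * ha.val_inv_mul
    · rfl
  right_inv q := by
    ext
    · show a * (_ * _) + _ = _
      linear_combination (q.1.1 - b * q.1.2) * ha.mul_val_inv
    · rfl

theorem card_quadraticForm_eq_card_diagSolutions [Fintype R] [DecidableEq R] (ha : IsUnit a)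
    (b c d : R) :
    Nat.card {p : R × R // a * p.1 ^ 2 + 2 * b * p.1 * p.2 + c * p.2 ^ 2 = d} =
      #(diagSolutions (a * c - b ^ 2) (a * d)) := by
  rw [Nat.card_congr (completeSquareEquiv ha b c d), Nat.card_eq_fintype_card,
    Fintype.card_subtype]
  rfl

end CompletingTheSquare

theorem count_quadratic_disc_one_five (n : ℕ) (hn : 3 ≤ n) (A B C D : ℤ)
    (hA : Odd A) (hD : Odd D)
    (hΔ : (A * C - B ^ 2) % 8 = 1 ∨ (A * C - B ^ 2) % 8 = 5) :
    Nat.card {xy : ZMod (2 ^ n) × ZMod (2 ^ n) //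
        (A : ZMod (2 ^ n)) * xy.1 ^ 2 + 2 * (B : ZMod (2 ^ n)) * xy.1 * xy.2
          + (C : ZMod (2 ^ n)) * xy.2 ^ 2 = (D : ZMod (2 ^ n))} =
      if A * D % 8 = 1 ∨ A * D % 8 = 5 then 2 ^ (n + 1) else 0 := by
  have hAunit : IsUnit (A : ZMod (2 ^ n)) := (ZMod.unitOfIsCoprime A
    (by exact_mod_cast (Int.isCoprime_two_right.2 hA).pow_right)).isUnit
  have hAD : A * D % 2 = 1 := Int.odd_iff.1 (hA.mul hD)
  rw [card_quadraticForm_eq_card_diagSolutions hAunit, ← Int.cast_mul A D,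
    show (A : ZMod (2 ^ n)) * C - B ^ 2 = ((A * C - B ^ 2 : ℤ) : ZMod (2 ^ n)) by push_cast; rfl]
  split_ifs with h
  · exact card_diagSolutions_pow_two hn (by omega) (by omega)
  · rw [diagSolutions_pow_two_eq_empty (by omega) (by omega) (by omega), card_empty]
end

section
/- Let a be even, b odd, with a, b coprime, and let u, v be integers with 2au + bv = 1. Let ζ be a primitive 2ab-th root of unity in ℂ, and set ζ₁ = ζ^(vb) (a primitive 2a-th root of unity) and ζ₂ = ζ^(2au) (a primitive b-th root of unity). Then (Σ_{x∈ℤ/aℤ} ζ₁^(x²)) · (Σ_{y∈ℤ/bℤ} ζ₂^(y²)) = Σ_{z∈ℤ/abℤ} ζ^(z²), i.e. G(1,0,2a)·G(1,0,b)/2 = G(1,0,2ab)/2 under the substitution A ↦ (ζ₁, ζ₂). -/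
theorem gauss_sum_multiplicativity_even (a b : ℕ) (ha : Even a) (hb : Odd b)
    (ha0 : 0 < a) (hab : Nat.Coprime a b) (u v : ℤ)
    (huv : 2 * (a : ℤ) * u + (b : ℤ) * v = 1)
    (ζ : ℂ) (hζ : IsPrimitiveRoot ζ (2 * a * b)) :
    (∑ x ∈ Finset.range a, (ζ ^ (v * b)) ^ ((x : ℤ) ^ 2)) *
      (∑ y ∈ Finset.range b, (ζ ^ (2 * a * u)) ^ ((y : ℤ) ^ 2)) =
    ∑ z ∈ Finset.range (a * b), ζ ^ ((z : ℤ) ^ 2) := by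
  have hb0 : 0 < b := hb.pos
  have hab0 : (0:ℤ) < (a:ℤ) * b := by positivity
  obtain ⟨c, hc⟩ := ha
  have hca : (a:ℤ) = 2 * c := by exact_mod_cast hc.trans (two_mul c).symm
  have hζ0 : ζ ≠ 0 := hζ.ne_zero (by positivity)
  have hN : ζ ^ ((2:ℤ) * a * b) = 1 := by
    have h := hζ.pow_eq_one
    rw [show ((2:ℤ) * a * b) = ((2 * a * b : ℕ) : ℤ) by push_cast; ring, zpow_natCast, h]
  have hmod : ∀ i j : ℤ, (2 * (a:ℤ) * b) ∣ (j - i) → ζ ^ i = ζ ^ j := by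
    rintro i j ⟨k, hk⟩
    have hj : j = i + (2 * (a:ℤ) * b) * k := by linarith
    rw [hj, zpow_add₀ hζ0, zpow_mul, hN, one_zpow, mul_one]
  have h1 : ∀ x : ℕ, (ζ ^ (v * b)) ^ ((x : ℤ) ^ 2) = ζ ^ (v * b * (x:ℤ)^2) := fun x => (zpow_mul ζ _ _).symm
  have h2 : ∀ y : ℕ, (ζ ^ (2 * (a:ℤ) * u)) ^ ((y : ℤ) ^ 2) = ζ ^ (2 * (a:ℤ) * u * (y:ℤ)^2) :=
    fun y => (zpow_mul ζ _ _).symm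
  simp only [h1, h2]
  rw [Finset.sum_mul_sum, ← Finset.sum_product']
  refine Finset.sum_nbij' (i := fun p : ℕ × ℕ =>
      (((b:ℤ) * v * p.1 + 2 * a * u * p.2) % ((a:ℤ) * b)).toNat)
    (j := fun z : ℕ => (z % a, z % b)) ?_ ?_ ?_ ?_ ?_
  · rintro ⟨x, y⟩ -
    simp only [Finset.mem_range]
    have h := Int.emod_lt_of_pos ((b:ℤ) * v * x + 2 * a * u * y) hab0
    have h' := Int.emod_nonneg ((b:ℤ) * v * x + 2 * a * u * y) (ne_of_gt hab0)
    have : ((a:ℤ) * b) = ((a * b : ℕ) : ℤ) := by push_cast; ring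
    omega
  · rintro z hz
    simp only [Finset.mem_product, Finset.mem_range]
    exact ⟨Nat.mod_lt _ ha0, Nat.mod_lt _ hb0⟩
  · -- left inverse
    rintro ⟨x, y⟩ hxy
    simp only [Finset.mem_product, Finset.mem_range] at hxy
    obtain ⟨hx, hy⟩ := hxy
    have hnn : (0:ℤ) ≤ ((b:ℤ) * v * x + 2 * a * u * y) % ((a:ℤ)*b) :=
      Int.emod_nonneg _ (ne_of_gt hab0)
    have e0 : (((((b:ℤ) * v * x + 2 * a * u * y) % ((a:ℤ)*b)).toNat : ℕ) : ℤ)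
        = ((b:ℤ) * v * x + 2 * a * u * y) % ((a:ℤ)*b) := Int.toNat_of_nonneg hnn
    have exa : (((b:ℤ) * v * x + 2 * a * u * y) % ((a:ℤ)*b)) % a
        = ((b:ℤ) * v * x + 2 * a * u * y) % a :=
      Int.emod_emod_of_dvd _ ⟨(b:ℤ), rfl⟩
    have exb : (((b:ℤ) * v * x + 2 * a * u * y) % ((a:ℤ)*b)) % b
        = ((b:ℤ) * v * x + 2 * a * u * y) % b :=
      Int.emod_emod_of_dvd _ ⟨(a:ℤ), mul_comm _ _⟩
    have hma : ((b:ℤ) * v * x + 2 * a * u * y) % a = (x:ℤ) % a := by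
      have : ((x:ℤ)) ≡ ((b:ℤ) * v * x + 2 * a * u * y) [ZMOD (a:ℤ)] :=
        Int.modEq_iff_dvd.mpr ⟨2 * u * ((y:ℤ) - x), by linear_combination (x:ℤ) * huv⟩
      exact this.symm
    have hmb : ((b:ℤ) * v * x + 2 * a * u * y) % b = (y:ℤ) % b := by
      have : ((y:ℤ)) ≡ ((b:ℤ) * v * x + 2 * a * u * y) [ZMOD (b:ℤ)] :=
        Int.modEq_iff_dvd.mpr ⟨v * ((x:ℤ) - y), by linear_combination (y:ℤ) * huv⟩
      exact this.symm
    have hxa : (x:ℤ) % a = x := Int.emod_eq_of_lt (by positivity) (by exact_mod_cast hx)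
    have hyb : (y:ℤ) % b = y := Int.emod_eq_of_lt (by positivity) (by exact_mod_cast hy)
    have ga : ((((b:ℤ) * v * x + 2 * a * u * y) % ((a:ℤ)*b)).toNat % a : ℕ) = x := by
      have : (((((b:ℤ) * v * x + 2 * a * u * y) % ((a:ℤ)*b)).toNat % a : ℕ) : ℤ) = (x:ℤ) := by
        push_cast
        rw [e0, exa, hma, hxa]
      exact_mod_cast this
    have gb : ((((b:ℤ) * v * x + 2 * a * u * y) % ((a:ℤ)*b)).toNat % b : ℕ) = y := by
      have : (((((b:ℤ) * v * x + 2 * a * u * y) % ((a:ℤ)*b)).toNat % b : ℕ) : ℤ) = (y:ℤ) := by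
        push_cast
        rw [e0, exb, hmb, hyb]
      exact_mod_cast this
    simp only [ga, gb]
  · -- right inverse
    intro z hz
    simp only [Finset.mem_range] at hz
    have d1 : (((z % a : ℕ)) : ℤ) + (a:ℤ) * ((z / a : ℕ) : ℤ) = (z:ℤ) := by
      exact_mod_cast Nat.mod_add_div z a
    have d2 : (((z % b : ℕ)) : ℤ) + (b:ℤ) * ((z / b : ℕ) : ℤ) = (z:ℤ) := by
      exact_mod_cast Nat.mod_add_div z b
    have hcong : ((z:ℤ)) ≡ ((b:ℤ) * v * ((z % a : ℕ):ℤ) + 2 * a * u * ((z % b : ℕ):ℤ))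
        [ZMOD ((a:ℤ)*b)] := by
      refine Int.modEq_iff_dvd.mpr ⟨-(v * ((z / a : ℕ):ℤ) + 2 * u * ((z / b : ℕ):ℤ)), ?_⟩
      linear_combination ((b:ℤ)*v) * d1 + (2*(a:ℤ)*u) * d2 + (z:ℤ) * huv
    have hzlt : (z:ℤ) < (a:ℤ)*b := by exact_mod_cast hz
    have : ((b:ℤ) * v * ((z % a : ℕ):ℤ) + 2 * a * u * ((z % b : ℕ):ℤ)) % ((a:ℤ)*b) = (z:ℤ) := by
      rw [← hcong]
      exact Int.emod_eq_of_lt (by positivity) hzlt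
    simp only [this]
    exact Int.toNat_natCast z
  · -- values
    rintro ⟨x, y⟩ hxy
    simp only
    rw [← zpow_add₀ hζ0]
    set z0 : ℤ := (b:ℤ) * v * x + 2 * a * u * y with hz0def
    have hnn : (0:ℤ) ≤ z0 % ((a:ℤ)*b) := Int.emod_nonneg _ (ne_of_gt hab0)
    have e0 : (((z0 % ((a:ℤ)*b)).toNat : ℕ) : ℤ) = z0 % ((a:ℤ)*b) := Int.toNat_of_nonneg hnn
    have hK : ((z0 % ((a:ℤ)*b)).toNat : ℤ) - z0 = (a:ℤ)*b * (-(z0 / ((a:ℤ)*b))) := by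
      rw [e0, Int.emod_def]; ring
    apply hmod
    rw [e0] at hK ⊢
    set n : ℤ := z0 % ((a:ℤ)*b) with hndef
    set K : ℤ := -(z0 / ((a:ℤ)*b)) with hKdef
    refine ⟨-(u * v * ((x:ℤ) - y)^2) + K * z0 + (c:ℤ) * b * K^2, ?_⟩
    have hstep : n = z0 + (a:ℤ)*b*K := by linarith
    linear_combination (n + z0 + (a:ℤ)*b*K) * hstep +
      ((b:ℤ)*v*(x:ℤ)^2 + 2*(a:ℤ)*u*(y:ℤ)^2) * huv + ((a:ℤ)*(b:ℤ)^2*K^2) * hca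
end
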